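/- For V_Y ∈ St_c(ℝⁿ) with n > c, the minimum over V_X ∈ St_c(ℝⁿ) of the nuclear norm of the stacked matrix [V_Yᵀ ; V_Xᵀ] equals √2 · c, attained at V_X = V_Y. -/

import Mathlib

/-!
For `A = [V_Yᵀ ; V_Xᵀ]` the Gram matrix `AᵀA = V_Y V_Yᵀ + V_X V_Xᵀ` is a sum of two orthogonal
projections, so its eigenvalues `λᵢ` lie in `[0, 2]` and add up to its trace `2c`. On `[0, 2]`
we have `√λ ≥ λ / √2`, with equality exactly at `λ ∈ {0, 2}`; hence `‖A‖₊ = ∑ √λᵢ ≥ 2c / √2`.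
For `V_X = V_Y` the Gram matrix is `2 V_Y V_Yᵀ`, whose eigenvalues are `0` and `2`.
-/

open Matrix

/-- The nuclear norm of a real matrix: the sum of its singular values. -/
noncomputable def nuclearNorm {m n : Type*} [Fintype m] [Fintype n] [DecidableEq n]
    (A : Matrix m n ℝ) : ℝ :=
  ∑ i, Real.sqrt ((show (Aᵀ * A).IsHermitian by
    simpa [Matrix.conjTranspose_eq_transpose_of_trivial] using
      Matrix.isHermitian_conjTranspose_mul_self A).eigenvalues i)

open scoped MatrixOrder

lemma Real.div_sqrt_le_sqrt {x a : ℝ} (hx : 0 ≤ x) (hxa : x ≤ a) : x / √a ≤ √x := by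
  rcases hx.eq_or_lt with rfl | hpos
  · simp
  calc x / √a ≤ x / √x :=
        div_le_div_of_nonneg_left hx (Real.sqrt_pos.2 hpos) (Real.sqrt_le_sqrt hxa)
    _ = √x := Real.div_sqrt

namespace Matrix

open scoped ComplexOrder

section Eigenvalues

variable {n 𝕜 : Type*} [Fintype n] [DecidableEq n] [RCLike 𝕜] {B : Matrix n n 𝕜}

lemma IsHermitian.eigenvalues_le_of_le_smul_one (hB : B.IsHermitian) {a : ℝ}
    (h : B ≤ a • 1) (i : n) : hB.eigenvalues i ≤ a := by
  have hmem : a - hB.eigenvalues i ∈ spectrum ℝ (algebraMap ℝ _ a - B) := by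
    rw [← spectrum.singleton_sub_eq]
    exact Set.sub_mem_sub rfl (hB.eigenvalues_mem_spectrum_real i)
  rw [Algebra.algebraMap_eq_smul_one] at hmem
  linarith [spectrum_nonneg_of_nonneg (sub_nonneg.mpr h) hmem]

open Polynomial in
lemma IsHermitian.eigenvalues_eq_zero_or_eq_of_mul_self_eq_smul (hB : B.IsHermitian) {a : ℝ}
    (h : B * B = a • B) (i : n) : hB.eigenvalues i = 0 ∨ hB.eigenvalues i = a := by
  have : Nonempty n := ⟨i⟩
  have hmem := spectrum.subset_polynomial_aeval B (X * X - C a * X)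
    ⟨_, hB.eigenvalues_mem_spectrum_real i, rfl⟩
  simp only [map_sub, map_mul, aeval_X, aeval_C, ← Algebra.smul_def, h, sub_self,
    spectrum.zero_eq, Set.mem_singleton_iff, eval_sub, eval_mul, eval_X, eval_C] at hmem
  have hroot : hB.eigenvalues i * (hB.eigenvalues i - a) = 0 := by linarith
  simpa [sub_eq_zero] using hroot

end Eigenvalues

lemma isStarProjection_mul_conjTranspose {m n R : Type*} [Fintype n] [DecidableEq n]
    [Fintype m] [CommSemiring R] [StarRing R] {V : Matrix m n R} (hV : Vᴴ * V = 1) :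
    IsStarProjection (V * Vᴴ) where
  isIdempotentElem := by rw [IsIdempotentElem, Matrix.mul_assoc, ← Matrix.mul_assoc Vᴴ, hV,
    Matrix.one_mul]
  isSelfAdjoint := by rw [IsSelfAdjoint, star_eq_conjTranspose, conjTranspose_mul,
    conjTranspose_conjTranspose]

lemma transpose_fromRows_mul_self {m₁ m₂ n R : Type*} [Fintype m₁] [Fintype m₂]
    [Semiring R] (A₁ : Matrix m₁ n R) (A₂ : Matrix m₂ n R) :
    (fromRows A₁ A₂)ᵀ * fromRows A₁ A₂ = A₁ᵀ * A₁ + A₂ᵀ * A₂ := by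
  rw [transpose_fromRows, fromCols_mul_fromRows]

end Matrix

section NuclearNorm

variable {m n : Type*} [Fintype m] [Fintype n] [DecidableEq n]

lemma nuclearNorm_eq_sum_sqrt_eigenvalues (A : Matrix m n ℝ) (hA : (Aᵀ * A).IsHermitian) :
    nuclearNorm A = ∑ i, √(hA.eigenvalues i) :=
  rfl

lemma trace_div_sqrt_le_nuclearNorm (A : Matrix m n ℝ) {a : ℝ} (h : Aᵀ * A ≤ a • 1) :
    (Aᵀ * A).trace / √a ≤ nuclearNorm A := by
  have hA : (Aᵀ * A).PosSemidef := by simpa using posSemidef_conjTranspose_mul_self A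
  rw [nuclearNorm_eq_sum_sqrt_eigenvalues A hA.1, hA.1.trace_eq_sum_eigenvalues]
  simp only [RCLike.ofReal_real_eq_id, id, Finset.sum_div]
  exact Finset.sum_le_sum fun i _ =>
    Real.div_sqrt_le_sqrt (hA.eigenvalues_nonneg i) (hA.1.eigenvalues_le_of_le_smul_one h i)

lemma nuclearNorm_eq_trace_div_sqrt (A : Matrix m n ℝ) {a : ℝ}
    (h : Aᵀ * A * (Aᵀ * A) = a • (Aᵀ * A)) : nuclearNorm A = (Aᵀ * A).trace / √a := by
  have hA : (Aᵀ * A).IsHermitian := by simpa using isHermitian_conjTranspose_mul_self A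
  rw [nuclearNorm_eq_sum_sqrt_eigenvalues A hA, hA.trace_eq_sum_eigenvalues]
  simp only [RCLike.ofReal_real_eq_id, id, Finset.sum_div]
  refine Finset.sum_congr rfl fun i _ => ?_
  rcases hA.eigenvalues_eq_zero_or_eq_of_mul_self_eq_smul h i with h0 | ha <;>
    simp only [*, Real.sqrt_zero, zero_div, Real.div_sqrt]

end NuclearNorm

theorem min_nuclearNorm_stacked_stiefel_general
    {c n : ℕ}
    (VY : Matrix (Fin n) (Fin c) ℝ) (hVY : VYᵀ * VY = 1) :
    (∀ VX : Matrix (Fin n) (Fin c) ℝ, VXᵀ * VX = 1 →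
        Real.sqrt 2 * (c : ℝ) ≤ nuclearNorm (fromRows VYᵀ VXᵀ)) ∧
      nuclearNorm (fromRows VYᵀ VYᵀ) = Real.sqrt 2 * (c : ℝ) := by
  have gram (V : Matrix (Fin n) (Fin c) ℝ) :
      (fromRows VYᵀ Vᵀ)ᵀ * fromRows VYᵀ Vᵀ = VY * VYᵀ + V * Vᵀ := by
    rw [transpose_fromRows_mul_self, transpose_transpose, transpose_transpose]
  have proj {V : Matrix (Fin n) (Fin c) ℝ} (hV : Vᵀ * V = 1) : IsStarProjection (V * Vᵀ) := by
    have h := isStarProjection_mul_conjTranspose (V := V)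
      (by rwa [conjTranspose_eq_transpose_of_trivial])
    rwa [conjTranspose_eq_transpose_of_trivial] at h
  have trace_proj {V : Matrix (Fin n) (Fin c) ℝ} (hV : Vᵀ * V = 1) : (V * Vᵀ).trace = c := by
    rw [trace_mul_comm, hV, trace_one, Fintype.card_fin]
  have two_mul_div_sqrt_two : 2 * (c : ℝ) / √2 = √2 * c := by
    rw [mul_div_right_comm, Real.div_sqrt]
  refine ⟨fun VX hVX => ?_, ?_⟩
  · have hle : VY * VYᵀ + VX * VXᵀ ≤ (2 : ℝ) • 1 := by
      rw [two_smul]; exact add_le_add (proj hVY).le_one (proj hVX).le_one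
    calc √2 * c = ((fromRows VYᵀ VXᵀ)ᵀ * fromRows VYᵀ VXᵀ).trace / √2 := by
          rw [gram, trace_add, trace_proj hVY, trace_proj hVX, ← two_mul_div_sqrt_two, two_mul]
      _ ≤ nuclearNorm (fromRows VYᵀ VXᵀ) :=
          trace_div_sqrt_le_nuclearNorm _ (by rwa [gram])
  · have hsq : (VY * VYᵀ + VY * VYᵀ) * (VY * VYᵀ + VY * VYᵀ)
        = (2 : ℝ) • (VY * VYᵀ + VY * VYᵀ) := by
      simp only [add_mul, mul_add, (proj hVY).isIdempotentElem.eq, two_smul]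
    rw [nuclearNorm_eq_trace_div_sqrt _ (a := 2) (by rwa [gram]), gram, trace_add, trace_proj hVY,
      ← two_mul, two_mul_div_sqrt_two]

/-- For `V_Y ∈ St_c(ℝⁿ)` with `n > c`, the minimum over
`V_X ∈ St_c(ℝⁿ)` of `‖[V_Yᵀ ; V_Xᵀ]‖₊` equals `√2 · c`, attained at `V_X = V_Y`. -/
theorem min_nuclearNorm_stacked_stiefel
    {c n : ℕ} (hcn : c < n)
    (VY : Matrix (Fin n) (Fin c) ℝ) (hVY : VYᵀ * VY = 1) :
    (∀ VX : Matrix (Fin n) (Fin c) ℝ, VXᵀ * VX = 1 →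
        Real.sqrt 2 * (c : ℝ) ≤ nuclearNorm (fromRows VYᵀ VXᵀ)) ∧
      nuclearNorm (fromRows VYᵀ VYᵀ) = Real.sqrt 2 * (c : ℝ) :=
  min_nuclearNorm_stacked_stiefel_general VY hVY
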